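/- Local naturality implies global naturality: Let ρ, ρ' be node feature functors and k a local NGN kernel assigning to each edge (p,q) of each graph a linear map k_{pq} : ρ(G_p) → ρ'(G_q) satisfying ρ'(ψ_q) ∘ k_{pq} = k_{p'q'} ∘ ρ(ψ_p) for every local edge isomorphism ψ : G_{pq} → G'_{p'q'}. Then the layer K_G(v)_q = Σ_{(p,q) ∈ E(G)} k_{pq}(v_p) satisfies the global naturality condition: for any graph isomorphism φ : G → G', one has ρ̂'(φ) ∘ K_G = K_{G'} ∘ ρ̂(φ), where ρ̂(G) = ⊕_{p ∈ V(G)} ρ(G_p) and ρ̂(φ)(v)_{φ(p)} = ρ(φ_p)(v_p). -/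
import Mathlib


/-- A concrete graph: a finite set of natural-number node labels and a set of
directed edges between them. -/
structure ConcreteGraph where
  verts : Finset ℕ
  edges : Finset (ℕ × ℕ)
  edges_sub : ∀ e ∈ edges, e.1 ∈ verts ∧ e.2 ∈ verts

/-- A graph isomorphism: a bijection of vertices preserving and reflecting edges. -/
structure GraphIso (G G' : ConcreteGraph) where
  toEquiv : {x // x ∈ G.verts} ≃ {x // x ∈ G'.verts}
  map_edge : ∀ i j : {x // x ∈ G.verts},
    ((i : ℕ), (j : ℕ)) ∈ G.edges ↔ ((toEquiv i : ℕ), (toEquiv j : ℕ)) ∈ G'.edges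

/-- The identity graph isomorphism. -/
def GraphIso.id (G : ConcreteGraph) : GraphIso G G :=
  ⟨Equiv.refl _, fun _ _ => Iff.rfl⟩

/-- Composition of graph isomorphisms. -/
def GraphIso.comp {G₁ G₂ G₃ : ConcreteGraph} (ψ : GraphIso G₂ G₃) (φ : GraphIso G₁ G₂) :
    GraphIso G₁ G₃ :=
  ⟨φ.toEquiv.trans ψ.toEquiv, fun i j => (φ.map_edge i j).trans (ψ.map_edge _ _)⟩

/-- The inverse of a graph isomorphism. -/
def GraphIso.symm {G G' : ConcreteGraph} (φ : GraphIso G G') : GraphIso G' G :=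
  ⟨φ.toEquiv.symm, fun i j => by rw [φ.map_edge]; simp⟩

/-- A graph feature space: a functor from concrete graphs and graph isomorphisms
to real vector spaces and invertible linear maps. -/
structure FeatureSpace where
  obj : ConcreteGraph → ModuleCat ℝ
  map : ∀ {G G' : ConcreteGraph}, GraphIso G G' → ((obj G) →ₗ[ℝ] (obj G'))
  map_id : ∀ G, map (GraphIso.id G) = LinearMap.id
  map_comp : ∀ {G₁ G₂ G₃ : ConcreteGraph} (φ : GraphIso G₁ G₂) (ψ : GraphIso G₂ G₃),
    map (ψ.comp φ) = (map ψ).comp (map φ)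

/-- A global natural graph network layer between graph feature spaces. -/
structure NaturalLayer (ρ ρ' : FeatureSpace) where
  app : ∀ G : ConcreteGraph, (ρ.obj G) →ₗ[ℝ] (ρ'.obj G)
  naturality : ∀ {G G' : ConcreteGraph} (φ : GraphIso G G'),
    (ρ'.map φ).comp (app G) = (app G').comp (ρ.map φ)

/-- A local edge isomorphism between edge neighbourhoods, together with its
restrictions to the node neighbourhoods of the head and tail nodes. -/
structure LocalEdgeIso (nodeN : ConcreteGraph → ℕ → ConcreteGraph)
    (edgeN : ConcreteGraph → ℕ → ℕ → ConcreteGraph)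
    (G G' : ConcreteGraph) (p q p' q' : ℕ) where
  edgeIso : GraphIso (edgeN G p q) (edgeN G' p' q')
  headIso : GraphIso (nodeN G p) (nodeN G' p')
  tailIso : GraphIso (nodeN G q) (nodeN G' q')

/-- A neighbourhood assignment: node and edge neighbourhoods such that every global
graph isomorphism restricts to local node isomorphisms and to local edge
isomorphisms whose head/tail restrictions are the corresponding node restrictions. -/
structure NbhdSetting where
  nodeNbhd : ConcreteGraph → ℕ → ConcreteGraph
  edgeNbhd : ConcreteGraph → ℕ → ℕ → ConcreteGraph
  nodeRes : ∀ {G G' : ConcreteGraph} (φ : GraphIso G G') (p : {x // x ∈ G.verts}),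
    GraphIso (nodeNbhd G (p : ℕ)) (nodeNbhd G' (φ.toEquiv p : ℕ))
  edgeRes : ∀ {G G' : ConcreteGraph} (φ : GraphIso G G') (p q : {x // x ∈ G.verts}),
    LocalEdgeIso nodeNbhd edgeNbhd G G' (p : ℕ) (q : ℕ) (φ.toEquiv p : ℕ) (φ.toEquiv q : ℕ)
  edgeRes_head : ∀ {G G' : ConcreteGraph} (φ : GraphIso G G') (p q : {x // x ∈ G.verts}),
    (edgeRes φ p q).headIso = nodeRes φ p
  edgeRes_tail : ∀ {G G' : ConcreteGraph} (φ : GraphIso G G') (p q : {x // x ∈ G.verts}),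
    (edgeRes φ p q).tailIso = nodeRes φ q

/-- The local NGN message passing layer: `K_G(v)_q = Σ_{(p,q) ∈ E(G)} k_{pq}(v_p)`. -/
def NGNLayer (N : NbhdSetting) (ρ ρ' : FeatureSpace)
    (k : ∀ (G : ConcreteGraph) (p q : ℕ),
      (ρ.obj (N.nodeNbhd G p)) →ₗ[ℝ] (ρ'.obj (N.nodeNbhd G q)))
    (G : ConcreteGraph) (v : ∀ p : {x // x ∈ G.verts}, ρ.obj (N.nodeNbhd G (p : ℕ)))
    (q : {x // x ∈ G.verts}) : ρ'.obj (N.nodeNbhd G (q : ℕ)) :=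
  ∑ p ∈ G.verts.attach, if ((p : ℕ), (q : ℕ)) ∈ G.edges then k G (p : ℕ) (q : ℕ) (v p) else 0

/-- Local naturality implies global naturality: if the kernel `k` satisfies
`ρ'(ψ_q) ∘ k_{pq} = k_{p'q'} ∘ ρ(ψ_p)` for every local edge isomorphism `ψ`, then the
message passing layer satisfies the global naturality condition
`ρ̂'(φ) ∘ K_G = K_{G'} ∘ ρ̂(φ)` for every graph isomorphism `φ : G → G'`, where
`ρ̂(φ)` acts nodewise via the restricted node isomorphisms. -/
theorem local_naturality_implies_global (N : NbhdSetting) (ρ ρ' : FeatureSpace)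
    (k : ∀ (G : ConcreteGraph) (p q : ℕ),
      (ρ.obj (N.nodeNbhd G p)) →ₗ[ℝ] (ρ'.obj (N.nodeNbhd G q)))
    (hk : ∀ {G G' : ConcreteGraph} {p q p' q' : ℕ}
      (ψ : LocalEdgeIso N.nodeNbhd N.edgeNbhd G G' p q p' q'),
      (ρ'.map ψ.tailIso).comp (k G p q) = (k G' p' q').comp (ρ.map ψ.headIso))
    {G G' : ConcreteGraph} (φ : GraphIso G G')
    (v : ∀ p : {x // x ∈ G.verts}, ρ.obj (N.nodeNbhd G (p : ℕ)))
    (w : ∀ p' : {x // x ∈ G'.verts}, ρ.obj (N.nodeNbhd G' (p' : ℕ)))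
    (hw : ∀ p : {x // x ∈ G.verts}, w (φ.toEquiv p) = ρ.map (N.nodeRes φ p) (v p)) :
    ∀ q : {x // x ∈ G.verts},
      ρ'.map (N.nodeRes φ q) (NGNLayer N ρ ρ' k G v q)
        = NGNLayer N ρ ρ' k G' w (φ.toEquiv q) := by
  intro q
  unfold NGNLayer
  rw [map_sum]
  refine Finset.sum_nbij' (fun p => φ.toEquiv p) (fun p' => φ.toEquiv.symm p')
    (fun _ _ => Finset.mem_attach _ _) (fun _ _ => Finset.mem_attach _ _)
    (fun p _ => Equiv.symm_apply_apply _ _) (fun p' _ => Equiv.apply_symm_apply _ _)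
    (fun p _ => ?_)
  by_cases h : ((p : ℕ), (q : ℕ)) ∈ G.edges
  · rw [if_pos h, if_pos ((φ.map_edge p q).mp h), hw]
    have := hk (N.edgeRes φ p q)
    rw [N.edgeRes_head, N.edgeRes_tail] at this
    exact LinearMap.congr_fun this (v p)
  · rw [if_neg h, if_neg (fun hc => h ((φ.map_edge p q).mpr hc)), map_zero]
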